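/- arXiv:2512.23574 — 3 statements merged into one kernel-verified Lean document; each statement's English description precedes it below -/
import Mathlib

section
/- Let G be a subgroup of ℝ^d containing ℤ^d and let A ⊆ G with h₀A ≠ G for some h₀ ≥ 2. Then there exists a decreasing sequence (A_q)_{q≥1} of subsets of G with A = ⋂_q A_q and h₀A ≠ ⋂_q h₀A_q. -/
/-- Sum of a nonempty tuple in an additive semigroup. -/
def finSum {S : Type*} [Add S] : ∀ {n : ℕ}, (Fin (n + 1) → S) → S
  | 0, f => f 0
  | n + 1, f => finSum (fun i => f i.castSucc) + f (Fin.last (n + 1))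

/-- The `h`-fold sumset of `A`: all sums of `h` not necessarily distinct elements of `A`. -/
def sumset {S : Type*} [Add S] (A : Set S) : ℕ → Set S
  | 0 => ∅
  | n + 1 => {x | ∃ f : Fin (n + 1) → S, (∀ i, f i ∈ A) ∧ finSum f = x}

lemma finSum_eq_sum {S : Type*} [AddCommMonoid S] : ∀ {n : ℕ} (f : Fin (n + 1) → S),
    finSum f = ∑ i, f i
  | 0, f => by simp [finSum]
  | n + 1, f => by
    rw [finSum, finSum_eq_sum, Fin.sum_univ_castSucc (n := n + 1)]

theorem stmt11 (d : ℕ) (hd : 1 ≤ d) (G : AddSubgroup (Fin d → ℝ))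
    (hZ : ∀ x : Fin d → ℝ, (∀ i, ∃ m : ℤ, x i = m) → x ∈ G)
    (A : Set (Fin d → ℝ)) (hAG : A ⊆ (G : Set (Fin d → ℝ)))
    (h₀ : ℕ) (hh₀ : 2 ≤ h₀) (hnon : sumset A h₀ ≠ (G : Set (Fin d → ℝ))) :
    ∃ Aq : ℕ → Set (Fin d → ℝ),
      (∀ q, Aq q ⊆ (G : Set (Fin d → ℝ))) ∧
      (∀ q, Aq (q + 1) ⊆ Aq q) ∧
      A = ⋂ q, Aq q ∧
      sumset A h₀ ≠ ⋂ q, sumset (Aq q) h₀ := by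
  set i0 : Fin d := ⟨0, hd⟩ with hi0
  set Aq : ℕ → Set (Fin d → ℝ) :=
    fun q => A ∪ {x | x ∈ G ∧ (q : ℝ) ≤ |x i0|} with hAq
  obtain ⟨n, rfl⟩ : ∃ n, h₀ = n + 1 := ⟨h₀ - 1, by omega⟩
  have hn : 1 ≤ n := by omega
  -- each Aq q is contained in G
  have hsub : ∀ q, Aq q ⊆ (G : Set (Fin d → ℝ)) := by
    intro q x hx
    rcases hx with hx | hx
    · exact hAG hx
    · exact hx.1
  -- the key fact: sumset (Aq q) (n+1) = G
  have hkey : ∀ q, sumset (Aq q) (n + 1) = (G : Set (Fin d → ℝ)) := by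
    intro q
    ext g
    constructor
    · rintro ⟨f, hf, rfl⟩
      rw [finSum_eq_sum]
      exact sum_mem (fun i _ => hsub q (hf i))
    · intro hg
      set N : ℤ := max q ⌈g i0 + q⌉ with hN
      have hNq : (q : ℝ) ≤ (N : ℝ) := by
        have : (q : ℤ) ≤ N := le_max_left _ _
        exact_mod_cast this
      have hNg : g i0 + q ≤ (N : ℝ) := le_trans (Int.le_ceil _) (by exact_mod_cast le_max_right _ _)
      have hN0 : (0 : ℝ) ≤ (N : ℝ) := le_trans (by positivity) hNq
      set v : Fin d → ℝ := fun j => if j = i0 then (N : ℝ) else 0 with hv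
      have hvG : v ∈ G := by
        apply hZ
        intro i
        by_cases h : i = i0
        · exact ⟨N, by simp [hv, h]⟩
        · exact ⟨0, by simp [hv, h]⟩
      have hvB : v ∈ Aq q := by
        refine Or.inr ⟨hvG, ?_⟩
        simpa [hv] using le_trans hNq (le_abs_self _)
      set w : Fin d → ℝ := g - n • v with hw
      have hwG : w ∈ G := sub_mem hg (nsmul_mem hvG n)
      have hwi0 : w i0 = g i0 - (n : ℝ) * N := by simp [hw, hv]
      have hwB : w ∈ Aq q := by
        refine Or.inr ⟨hwG, ?_⟩
        rw [hwi0]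
        refine le_abs.mpr (Or.inr ?_)
        have h1 : (N : ℝ) ≤ (n : ℝ) * N := by
          nlinarith [(Nat.one_le_cast (α := ℝ)).mpr hn]
        linarith
      refine ⟨fun i => if i = Fin.last n then w else v, ?_, ?_⟩
      · intro i
        by_cases h : i = Fin.last n <;> simp [h, hwB, hvB]
      · rw [finSum_eq_sum, Fin.sum_univ_castSucc]
        have h2 : ∀ i : Fin n, (i.castSucc : Fin (n + 1)) ≠ Fin.last n :=
          fun i => (Fin.castSucc_lt_last i).ne
        simp only [h2, if_neg, if_pos, Finset.sum_const, Finset.card_univ, Fintype.card_fin]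
        simp [hw]
  refine ⟨Aq, hsub, ?_, ?_, ?_⟩
  · intro q x hx
    rcases hx with hx | hx
    · exact Or.inl hx
    · refine Or.inr ⟨hx.1, le_trans ?_ hx.2⟩
      exact_mod_cast Nat.cast_le.mpr (Nat.le_succ q)
  · ext x
    simp only [Set.mem_iInter]
    constructor
    · intro hx q; exact Or.inl hx
    · intro hx
      by_contra hxA
      have : ∀ q : ℕ, (q : ℝ) ≤ |x i0| := by
        intro q
        rcases hx q with h | h
        · exact absurd h hxA
        · exact h.2
      obtain ⟨q, hq⟩ := exists_nat_gt |x i0|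
      exact absurd (this q) (not_le.mpr hq)
  · have : ⋂ q, sumset (Aq q) (n + 1) = (G : Set (Fin d → ℝ)) := by
      simp only [hkey]
      exact Set.iInter_const _
    rw [this]
    exact hnon
end

section
/- For an integer h ≥ 2, the set h*ℤ = {hℓ : ℓ ∈ ℤ} is a maximal nonbasis of order h for ℤ if and only if h is prime. (That is: h·(hℤ) = hℤ ≠ ℤ, and every set B with hℤ ⊊ B ⊆ ℤ satisfies hB = ℤ, if and only if h is prime.) -/
lemma finSum_eq {n : ℕ} (f : Fin (n + 1) → ℤ) : finSum f = ∑ i, f i := by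
  induction n with
  | zero => simp [finSum]
  | succ n ih => rw [finSum, ih]; exact (Fin.sum_univ_castSucc f).symm

lemma mem_sumset {A : Set ℤ} {n : ℕ} (hn : n ≠ 0) {x : ℤ} :
    x ∈ sumset A n ↔ ∃ f : Fin n → ℤ, (∀ i, f i ∈ A) ∧ ∑ i, f i = x := by
  obtain ⟨m, rfl⟩ := Nat.exists_eq_succ_of_ne_zero hn
  simp only [sumset, Set.mem_setOf_eq]
  constructor
  · rintro ⟨f, hf, rfl⟩; exact ⟨f, hf, (finSum_eq f).symm⟩
  · rintro ⟨f, hf, rfl⟩; exact ⟨f, hf, finSum_eq f⟩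

lemma sum_pick {h k : ℕ} (hk : k < h) (b c : ℤ) :
    ∑ i : Fin h, (if (i : ℕ) < k then b else if (i : ℕ) = k then c else 0)
      = k * b + c := by
  rw [Fin.sum_univ_eq_sum_range (fun i => if i < k then b else if i = k then c else 0)]
  have hsplit : ∀ i : ℕ, (if i < k then b else if i = k then c else 0)
      = (if i < k then b else 0) + (if i = k then c else 0) := by
    intro i
    by_cases h1 : i < k
    · rw [if_pos h1, if_pos h1, if_neg (by omega : ¬ i = k), add_zero]
    · simp [h1]
  simp only [hsplit]
  rw [Finset.sum_add_distrib]
  congr 1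
  · rw [← Finset.sum_filter]
    have : Finset.filter (· < k) (Finset.range h) = Finset.range k := by
      ext i; simp; omega
    rw [this]
    simp [mul_comm]
  · rw [Finset.sum_ite_eq' (Finset.range h) k (fun _ => c)]
    simp [hk]

theorem stmt15 (h : ℕ) (hh : 2 ≤ h) :
    (sumset {x : ℤ | (h : ℤ) ∣ x} h ≠ Set.univ ∧
        ∀ B : Set ℤ, {x : ℤ | (h : ℤ) ∣ x} ⊂ B → sumset B h = Set.univ) ↔
      Nat.Prime h := by
  have hne : h ≠ 0 := by omega
  constructor
  · rintro ⟨-, hQ⟩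
    by_contra hnp
    set d := h.minFac with hd
    have hdp : d.Prime := Nat.minFac_prime (by omega)
    have hdvd : d ∣ h := Nat.minFac_dvd h
    have hdlt : d < h := by
      rcases lt_or_eq_of_le (Nat.le_of_dvd (by omega) hdvd) with h' | h'
      · exact h'
      · exact absurd (Nat.prime_def_minFac.mpr ⟨hh, h'⟩) hnp
    have hd2 : 2 ≤ d := hdp.two_le
    set B : Set ℤ := {x : ℤ | (h : ℤ) ∣ x} ∪ {(d : ℤ)} with hB
    have hss : {x : ℤ | (h : ℤ) ∣ x} ⊂ B := by
      constructor
      · exact Set.subset_union_left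
      · intro hsub
        have : (h : ℤ) ∣ (d : ℤ) := hsub (Set.mem_union_right _ rfl)
        have : h ∣ d := by exact_mod_cast this
        have := Nat.le_of_dvd (by omega) this
        omega
    have h1 : (1 : ℤ) ∈ sumset B h := by rw [hQ B hss]; trivial
    rw [mem_sumset hne] at h1
    obtain ⟨f, hf, hsum⟩ := h1
    have hddvd : (d : ℤ) ∣ ∑ i, f i := by
      apply Finset.dvd_sum
      intro i _
      rcases hf i with hmem | hmem
      · exact dvd_trans (by exact_mod_cast hdvd) hmem
      · simp only [Set.mem_singleton_iff] at hmem
        rw [hmem]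
    rw [hsum] at hddvd
    have := Int.le_of_dvd one_pos hddvd
    omega
  · intro hp
    have hsum_self : sumset {x : ℤ | (h : ℤ) ∣ x} h = {x : ℤ | (h : ℤ) ∣ x} := by
      ext x
      rw [mem_sumset hne]
      constructor
      · rintro ⟨f, hf, rfl⟩
        exact Finset.dvd_sum fun i _ => hf i
      · intro hx
        refine ⟨fun i => if (i : ℕ) < 0 then 0 else if (i : ℕ) = 0 then x else 0, ?_, ?_⟩
        · intro i
          dsimp only
          split_ifs <;> simp_all [Set.mem_setOf_eq]
        · rw [sum_pick (by omega) 0 x]; ring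
    constructor
    · rw [hsum_self]
      intro hcontra
      have : (1 : ℤ) ∈ {x : ℤ | (h : ℤ) ∣ x} := by rw [hcontra]; trivial
      have := Int.le_of_dvd one_pos this
      omega
    · intro B hss
      obtain ⟨b, hbB, hbnot⟩ := Set.exists_of_ssubset hss
      have hsub : {x : ℤ | (h : ℤ) ∣ x} ⊆ B := hss.1
      have hcop : IsCoprime (h : ℤ) b := by
        rw [Int.isCoprime_iff_gcd_eq_one]
        have : ¬ h ∣ b.natAbs := by
          intro hc
          exact hbnot (by simpa using Int.natCast_dvd.mpr hc)
        exact (Nat.Prime.coprime_iff_not_dvd hp).mpr this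
      obtain ⟨u, v, huv⟩ := hcop
      ext n
      simp only [Set.mem_univ, iff_true]
      rw [mem_sumset hne]
      set K : ℤ := n * v with hK
      set k : ℕ := (K % h).toNat with hk
      have hpos : (0 : ℤ) < h := by exact_mod_cast Nat.pos_of_ne_zero hne
      have hkh : k < h := by
        have h1 : K % h < h := Int.emod_lt_of_pos K hpos
        have h2 : 0 ≤ K % h := Int.emod_nonneg K (by omega)
        omega
      have hkK : (h : ℤ) ∣ K - k := by
        have : (k : ℤ) = K % h := by
          rw [hk]; exact Int.toNat_of_nonneg (Int.emod_nonneg K (by omega))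
        rw [this]
        exact Int.dvd_self_sub_of_emod_eq rfl
      have hdvd : (h : ℤ) ∣ n - k * b := by
        have h1 : (h : ℤ) ∣ n - K * b := by
          have : n - K * b = n * u * h := by
            rw [hK]; linear_combination (-n) * huv
          rw [this]; exact dvd_mul_left _ _
        have h2 : (h : ℤ) ∣ (K - k) * b := hkK.mul_right b
        have : n - k * b = (n - K * b) + (K - k) * b := by ring
        rw [this]
        exact dvd_add h1 h2
      refine ⟨fun i => if (i : ℕ) < k then b else if (i : ℕ) = k then n - k * b else 0, ?_, ?_⟩
      · intro i
        dsimp only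
        split_ifs
        · exact hbB
        · exact hsub hdvd
        · exact hsub (dvd_zero _)
      · rw [sum_pick hkh b (n - k * b)]; ring
end

section
/- Let G be a locally compact Hausdorff abelian topological group with a Radon (Haar) measure μ. Fix h ≥ 1, and let (θ_{h,q})_{q≥1} be a decreasing sequence of nonnegative reals with limit θ_h. Let (A_q)_{q≥1} be a decreasing sequence of compact subsets of G with μ(hA_q) = θ_{h,q} for all q, with A = ⋂_q A_q nonempty. Then μ(hA) = θ_h. -/
/-!
The `h`-fold sumset is the image of the compact set `A^h` under the continuous addition map,
and a continuous map commutes with intersections of decreasing sequences of compact sets: a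
point lying in every image has nonempty compact fibres over each stage, and these fibres
have a common point. Hence `hA = ⋂_q hA_q`, and continuity from above of `μ`, which is
finite on the compact set `hA_0`, gives `μ(hA) = lim_q θ_{h,q} = θ_h`.
-/

open Set Filter Topology MeasureTheory

section Sumset

variable {S : Type*} [Add S]

lemma sumset_succ_eq_image (A : Set S) (n : ℕ) :
    sumset A (n + 1) = finSum '' univ.pi fun _ : Fin (n + 1) => A := by
  ext x
  simp [sumset]

lemma sumset_mono {A B : Set S} (hAB : A ⊆ B) : ∀ n, sumset A n ⊆ sumset B n
  | 0 => subset_rfl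
  | n + 1 => by
    rw [sumset_succ_eq_image, sumset_succ_eq_image]
    exact image_mono (pi_mono fun _ _ => hAB)

variable [TopologicalSpace S] [ContinuousAdd S]

lemma continuous_finSum : ∀ n : ℕ, Continuous (finSum : (Fin (n + 1) → S) → S)
  | 0 => continuous_apply 0
  | n + 1 =>
    ((continuous_finSum n).comp (continuous_pi fun i => continuous_apply i.castSucc)).add
      (continuous_apply _)

lemma IsCompact.sumset {A : Set S} (hA : IsCompact A) : ∀ n, IsCompact (sumset A n)
  | 0 => isCompact_empty
  | n + 1 => by
    rw [sumset_succ_eq_image]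
    exact (isCompact_univ_pi fun _ => hA).image (continuous_finSum n)

end Sumset

lemma Continuous.image_iInter_of_isCompact {X Y : Type*} [TopologicalSpace X] [T2Space X]
    [TopologicalSpace Y] [T1Space Y] {f : X → Y} (hf : Continuous f) {K : ℕ → Set X}
    (hK : ∀ q, IsCompact (K q)) (hanti : Antitone K) :
    f '' ⋂ q, K q = ⋂ q, f '' K q := by
  refine (image_iInter_subset K f).antisymm fun y hy => ?_
  have hfibre : ∀ q, IsCompact (K q ∩ f ⁻¹' {y}) :=
    fun q => (hK q).inter_right (isClosed_singleton.preimage hf)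
  obtain ⟨x, hx⟩ := IsCompact.nonempty_iInter_of_sequence_nonempty_isCompact_isClosed
    (fun q => K q ∩ f ⁻¹' {y}) (fun q => inter_subset_inter_left _ (hanti q.le_succ))
    (fun q => mem_iInter.mp hy q) (hfibre 0) (fun q => (hfibre q).isClosed)
  rw [mem_iInter] at hx
  exact ⟨x, mem_iInter.mpr fun q => (hx q).1, (hx 0).2⟩

lemma sumset_iInter_of_isCompact {S : Type*} [Add S] [TopologicalSpace S] [ContinuousAdd S]
    [T2Space S] {A : ℕ → Set S} (hA : ∀ q, IsCompact (A q)) (hanti : Antitone A) :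
    ∀ n, sumset (⋂ q, A q) n = ⋂ q, sumset (A q) n
  | 0 => (iInter_const ∅).symm
  | n + 1 => by
    have hpi : (univ.pi fun _ : Fin (n + 1) => ⋂ q, A q) = ⋂ q, univ.pi fun _ => A q := by
      ext f
      simp only [Set.mem_pi, mem_univ, true_implies, mem_iInter]
      exact forall_comm
    simp only [sumset_succ_eq_image, hpi]
    exact (continuous_finSum n).image_iInter_of_isCompact
      (fun q => isCompact_univ_pi fun _ => hA q) fun p q hpq => pi_mono fun _ _ => hanti hpq

lemma tendsto_measure_iInter_of_isCompact {X : Type*} [TopologicalSpace X] [T2Space X]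
    [MeasurableSpace X] [OpensMeasurableSpace X] (μ : Measure X) [IsFiniteMeasureOnCompacts μ]
    {K : ℕ → Set X} (hK : ∀ q, IsCompact (K q)) (hanti : Antitone K) :
    Tendsto (fun q => μ (K q)) atTop (𝓝 (μ (⋂ q, K q))) :=
  tendsto_measure_iInter_atTop (fun q => (hK q).isClosed.nullMeasurableSet) hanti
    ⟨0, (hK 0).measure_lt_top.ne⟩

open MeasureTheory in
theorem stmt18_general {G : Type*} [AddCommGroup G] [TopologicalSpace G]
    [IsTopologicalAddGroup G] [T2Space G]
    [MeasurableSpace G] [BorelSpace G]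
    (μ : Measure G) [IsFiniteMeasureOnCompacts μ]
    (h : ℕ) (θh : ℝ)
    (θ : ℕ → ℝ)
    (hθlim : Filter.Tendsto θ Filter.atTop (nhds θh))
    (Aq : ℕ → Set G) (hcomp : ∀ q, IsCompact (Aq q))
    (hdec : ∀ q, Aq (q + 1) ⊆ Aq q)
    (hmeas : ∀ q, μ (sumset (Aq q) h) = ENNReal.ofReal (θ q))
    (A : Set G) (hA : A = ⋂ q, Aq q) :
    μ (sumset A h) = ENNReal.ofReal θh := by
  have hanti : Antitone Aq := antitone_nat_of_succ_le hdec
  have hlim := tendsto_measure_iInter_of_isCompact μ (fun q => (hcomp q).sumset h)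
    fun p q hpq => sumset_mono (hanti hpq) h
  rw [← sumset_iInter_of_isCompact hcomp hanti, ← hA] at hlim
  simp only [hmeas] at hlim
  exact tendsto_nhds_unique hlim ((ENNReal.continuous_ofReal.tendsto θh).comp hθlim)

open MeasureTheory in
theorem stmt18 {G : Type*} [AddCommGroup G] [TopologicalSpace G]
    [IsTopologicalAddGroup G] [T2Space G] [LocallyCompactSpace G]
    [MeasurableSpace G] [BorelSpace G]
    (μ : Measure G) [IsFiniteMeasureOnCompacts μ] [μ.OuterRegular]
    (h : ℕ) (hh : 0 < h) (θh : ℝ) (hθh : 0 ≤ θh)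
    (θ : ℕ → ℝ) (hθnn : ∀ q, 0 ≤ θ q) (hθdec : ∀ q, θ (q + 1) ≤ θ q)
    (hθlim : Filter.Tendsto θ Filter.atTop (nhds θh))
    (Aq : ℕ → Set G) (hcomp : ∀ q, IsCompact (Aq q))
    (hdec : ∀ q, Aq (q + 1) ⊆ Aq q)
    (hmeas : ∀ q, μ (sumset (Aq q) h) = ENNReal.ofReal (θ q))
    (A : Set G) (hA : A = ⋂ q, Aq q) (hne : A.Nonempty) :
    μ (sumset A h) = ENNReal.ofReal θh :=
  stmt18_general μ h θh θ hθlim Aq hcomp hdec hmeas A hA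
end
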